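/- If the boundary ∂ẑ of a relative cycle ẑ of the pair K̂[b,d) (with [ẑ] ∈ H(K̂[b,d))) contains a vertical cell σ×d with max σ = d (nonzero coefficient), then [ẑ] is not in the image of the map H(K̂[b,d+1)) → H(K̂[b,d)) induced by inclusion of pairs. -/

import Mathlib

open Finsupp
open scoped Classical

/-- A finite Δ-complex over a field `F`: each cell has a dimension, a boundary chain,
and an integer support interval `T(σ) = [tmin σ, tmax σ] ⊆ [0, n]`; whenever `σ` appears
in `∂τ` one has `tmin σ < tmin τ < tmax τ < tmax σ`. -/
structure DeltaComplex (F : Type) [Field F] (n : ℤ) where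
  Cell : Type
  deq : DecidableEq Cell
  fin : Fintype Cell
  dim : Cell → ℕ
  tmin : Cell → ℤ
  tmax : Cell → ℤ
  bdry : Cell → (Cell →₀ F)
  tmin_nonneg : ∀ σ, 0 ≤ tmin σ
  tmin_lt_tmax : ∀ σ, tmin σ < tmax σ
  tmax_le : ∀ σ, tmax σ ≤ n
  bdry_dim : ∀ τ σ, bdry τ σ ≠ 0 → dim σ + 1 = dim τ
  nest : ∀ τ σ, bdry τ σ ≠ 0 → tmin σ < tmin τ ∧ tmax τ < tmax σ
  bdry_bdry : ∀ τ, ((bdry τ).sum fun σ a => a • bdry σ) = 0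

attribute [instance] DeltaComplex.deq DeltaComplex.fin

variable {F : Type} [Field F] {n : ℤ}

/-- The boundary of a chain of `K`. -/
noncomputable def bd (K : DeltaComplex F n) (c : K.Cell →₀ F) : K.Cell →₀ F :=
  c.sum fun τ a => a • K.bdry τ

/-- A chain is supported on a set of cells. -/
def SuppOn {α β : Type} [Zero β] (c : α →₀ β) (S : α → Prop) : Prop :=
  ∀ x, c x ≠ 0 → S x

/-- Cells of the prism `K̂`: vertical cells `σ×{i}` and horizontal cells `σ×[i,i+1]`. -/
inductive PCell (C : Type) where
  | vert : C → ℤ → PCell C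
  | horiz : C → ℤ → PCell C
deriving DecidableEq

/-- Membership of a prism cell in the prism `K̂`. -/
def inPrism (K : DeltaComplex F n) : PCell K.Cell → Prop
  | .vert σ i => K.tmin σ ≤ i ∧ i ≤ K.tmax σ
  | .horiz σ i => K.tmin σ ≤ i ∧ i + 1 ≤ K.tmax σ

/-- Membership of a prism cell in the interlevel subcomplex `K̂_i^j` (cells `σ×T` with
`T ⊆ [i,j]`). -/
def inSub (K : DeltaComplex F n) (i j : ℤ) : PCell K.Cell → Prop
  | .vert σ t => (K.tmin σ ≤ t ∧ t ≤ K.tmax σ) ∧ i ≤ t ∧ t ≤ j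
  | .horiz σ t => (K.tmin σ ≤ t ∧ t + 1 ≤ K.tmax σ) ∧ i ≤ t ∧ t + 1 ≤ j

/-- The boundary of a single prism cell: `∂(τ×i) = (∂τ)×i` and
`∂(σ×[i,i+1]) = σ×(i+1) − σ×i − (∂σ)×[i,i+1]`. -/
noncomputable def pcellBd (K : DeltaComplex F n) : PCell K.Cell → (PCell K.Cell →₀ F)
  | .vert τ i => (K.bdry τ).sum fun σ a => Finsupp.single (PCell.vert σ i) a
  | .horiz σ i =>
      Finsupp.single (PCell.vert σ (i + 1)) 1 - Finsupp.single (PCell.vert σ i) 1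
        - (K.bdry σ).sum fun ρ a => Finsupp.single (PCell.horiz ρ i) a

/-- The boundary of a prism chain. -/
noncomputable def pbd (K : DeltaComplex F n) (c : PCell K.Cell →₀ F) : PCell K.Cell →₀ F :=
  c.sum fun x a => a • pcellBd K x

/-- `z` is a relative cycle of the pair of subcomplexes `(A, B)` of the prism. -/
def RelCycle (K : DeltaComplex F n) (A B : PCell K.Cell → Prop)
    (z : PCell K.Cell →₀ F) : Prop :=
  SuppOn z A ∧ SuppOn (pbd K z) B

/-- The homology class `[z] ∈ H(A,B)` lies in the image of the map
`H(A',B') → H(A,B)` induced by the inclusion of pairs `(A',B') ⊆ (A,B)`: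
there is a relative cycle `α` of `(A',B')` homologous to `z` within `(A,B)`. -/
def InImg (K : DeltaComplex F n) (A' B' A B : PCell K.Cell → Prop)
    (z : PCell K.Cell →₀ F) : Prop :=
  ∃ α β γ : PCell K.Cell →₀ F,
    RelCycle K A' B' α ∧ SuppOn β A ∧ SuppOn γ B ∧ z = α + pbd K β + γ

/-- The vertical prism chain `w × t`. -/
noncomputable def vchain (K : DeltaComplex F n) (w : K.Cell →₀ F) (t : ℤ) :
    PCell K.Cell →₀ F :=
  w.sum fun σ a => Finsupp.single (PCell.vert σ t) a

/-- A valid choice of times for Lift-Cycle: for every simplex `τ` of `z` with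
`T(τ) ∩ [b,d] ≠ ∅`, the chosen time satisfies `t τ ∈ T(τ) ∩ [b,d]`. -/
def ValidTimes (K : DeltaComplex F n) (z : K.Cell →₀ F) (b d : ℤ) (t : K.Cell → ℤ) : Prop :=
  ∀ τ, z τ ≠ 0 → K.tmin τ ≤ d → b ≤ K.tmax τ →
    K.tmin τ ≤ t τ ∧ t τ ≤ K.tmax τ ∧ b ≤ t τ ∧ t τ ≤ d

/-- The chain `ẑ` produced by `Lift-Cycle(z, (s,f), w₀)` with the choice of times `t`
(here `b = min s f`, `d = max s f`): the sum of the vertical cells `⟨τ,z⟩·(τ×t_τ)` over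
simplices `τ` of `z` with `T(τ) ∩ [b,d] ≠ ∅`, plus horizontal cells `σ×[k,k+1]`
(oriented from `s` to `f`) whose coefficient is the running sum
`⟨σ,w₀⟩ + Σ ⟨τ,z⟩·⟨σ,∂τ⟩` over the cofaces `τ` whose time `t_τ` has already been passed
when traversing from `s` to `f`. -/
noncomputable def liftCycle (K : DeltaComplex F n) (z : K.Cell →₀ F) (s f : ℤ)
    (w0 : K.Cell →₀ F) (t : K.Cell → ℤ) : PCell K.Cell →₀ F :=
  (∑ τ ∈ z.support.filter (fun τ => K.tmin τ ≤ max s f ∧ min s f ≤ K.tmax τ),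
      Finsupp.single (PCell.vert τ (t τ)) (z τ))
  + ∑ σ : K.Cell, ∑ k ∈ Finset.Icc (min s f) (max s f - 1),
      Finsupp.single (PCell.horiz σ k)
        ((if s ≤ f then (1 : F) else -1) *
          (w0 σ +
            ∑ τ ∈ z.support.filter (fun τ =>
                (K.tmin τ ≤ max s f ∧ min s f ≤ K.tmax τ) ∧
                  (if s ≤ f then t τ ≤ k else k + 1 ≤ t τ)),
              z τ * (K.bdry τ) σ))

/-- Cells of the cone `K̄ = ω ∗ K`: base simplices, the cone vertex `ω`,
and cone simplices `σ̄ = ω ∗ σ`. -/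
inductive CCell (C : Type) where
  | base : C → CCell C
  | omega : CCell C
  | cone : C → CCell C
deriving DecidableEq

/-- Boundary of a single cell of the cone `K̄`:
`∂σ` for base simplices, `0` for `ω`, and `∂(ω∗σ) = σ − ω∗∂σ` (minus `ω` when `σ` is a
vertex) for cone simplices. -/
noncomputable def ccellBd (K : DeltaComplex F n) : CCell K.Cell → (CCell K.Cell →₀ F)
  | .base σ => (K.bdry σ).sum fun ρ a => Finsupp.single (CCell.base ρ) a
  | .omega => 0
  | .cone σ =>
      Finsupp.single (CCell.base σ) 1
        - (K.bdry σ).sum (fun ρ a => Finsupp.single (CCell.cone ρ) a)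
        - (if K.dim σ = 0 then Finsupp.single CCell.omega 1 else 0)

/-- The boundary of a chain of the cone `K̄`. -/
noncomputable def cbd (K : DeltaComplex F n) (c : CCell K.Cell →₀ F) : CCell K.Cell →₀ F :=
  c.sum fun x a => a • ccellBd K x

/-- The restriction `c ∩ K` of a cone chain to the base simplices, as a chain in `K`. -/
noncomputable def basePart (K : DeltaComplex F n) (c : CCell K.Cell →₀ F) : K.Cell →₀ F :=
  c.sum fun x a =>
    match x with
    | .base σ => Finsupp.single σ a
    | .omega => 0
    | .cone _ => 0

/-- The restriction `c ∩ (K̄ − K)` of a cone chain to the cells not in the base. -/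
noncomputable def conePart (K : DeltaComplex F n) (c : CCell K.Cell →₀ F) :
    CCell K.Cell →₀ F :=
  c.sum fun x a =>
    match x with
    | .base _ => 0
    | .omega => Finsupp.single CCell.omega a
    | .cone ρ => Finsupp.single (CCell.cone ρ) a

/-- The order of the cells of `K̄` in the cone filtration: base simplices by increasing
`min σ`, then `ω`, then cone simplices by decreasing `max σ`, ties broken consistently
so that every prefix is a subcomplex. -/
structure ConeOrder (K : DeltaComplex F n) where
  pos : CCell K.Cell → ℕ
  inj : Function.Injective pos
  base_lt_base : ∀ σ τ : K.Cell, K.tmin σ < K.tmin τ → pos (.base σ) < pos (.base τ)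
  base_lt_omega : ∀ σ : K.Cell, pos (.base σ) < pos .omega
  omega_lt_cone : ∀ σ : K.Cell, pos .omega < pos (.cone σ)
  cone_lt_cone : ∀ σ τ : K.Cell, K.tmax τ < K.tmax σ → pos (.cone σ) < pos (.cone τ)
  faces_first : ∀ x y, (ccellBd K x) y ≠ 0 → pos y < pos x

/-- `σ` is the pivot (lowest nonzero entry) of the column (chain) `c`. -/
def IsLow (K : DeltaComplex F n) (O : ConeOrder K) (c : CCell K.Cell →₀ F)
    (σ : CCell K.Cell) : Prop :=
  c σ ≠ 0 ∧ ∀ ρ, c ρ ≠ 0 → O.pos ρ ≤ O.pos σ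

/-- `R = DV` is a decomposition of the boundary matrix `D` of the cone filtration:
`V` is invertible upper-triangular and `R` is reduced (pivots of nonzero columns lie
in pairwise distinct rows). -/
structure IsReduction (K : DeltaComplex F n) (O : ConeOrder K)
    (R V : CCell K.Cell → (CCell K.Cell →₀ F)) : Prop where
  rdv : ∀ τ, R τ = cbd K (V τ)
  upper : ∀ τ ρ, (V τ) ρ ≠ 0 → O.pos ρ ≤ O.pos τ
  diag : ∀ τ, (V τ) τ ≠ 0
  reduced : ∀ τ τ' σ, τ ≠ τ' → IsLow K O (R τ) σ → ¬ IsLow K O (R τ') σ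

/-- One run of the lazy (standard left-to-right) reduction of the column of `τ`:
starting from a column `c` (with coefficient vector `v`), while the column is nonzero
and its pivot collides with the pivot of an earlier (already reduced) column, subtract
the appropriate scalar multiple of that column. -/
inductive LazyReduces (K : DeltaComplex F n) (O : ConeOrder K)
    (R V : CCell K.Cell → (CCell K.Cell →₀ F)) (τ : CCell K.Cell) :
    (CCell K.Cell →₀ F) → (CCell K.Cell →₀ F) →
      (CCell K.Cell →₀ F) → (CCell K.Cell →₀ F) → Prop
  | done (c v : CCell K.Cell →₀ F)
      (h : ∀ σ, IsLow K O c σ → ∀ τ', O.pos τ' < O.pos τ → ¬ IsLow K O (R τ') σ) :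
      LazyReduces K O R V τ c v c v
  | step (c v c' v' : CCell K.Cell →₀ F) (τ' σ : CCell K.Cell)
      (hlt : O.pos τ' < O.pos τ) (hc : IsLow K O c σ) (hr : IsLow K O (R τ') σ)
      (next : LazyReduces K O R V τ (c - (c σ / ((R τ') σ)) • R τ')
        (v - (c σ / ((R τ') σ)) • V τ') c' v') :
      LazyReduces K O R V τ c v c' v'

/-- `R = DV` is obtained by the lazy reduction: every column `R τ` (with coefficient
column `V τ`) is the result of the lazy reduction of the boundary column of `τ`,
columns being processed from left to right. -/
def IsLazyReduction (K : DeltaComplex F n) (O : ConeOrder K)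
    (R V : CCell K.Cell → (CCell K.Cell →₀ F)) : Prop :=
  ∀ τ, LazyReduces K O R V τ (ccellBd K τ) (Finsupp.single τ 1) (R τ) (V τ)

/-!
Write `ẑ = α + ∂β + γ` with `α` a relative cycle of `K̂[b,d+1)` and `γ` a chain of `K̂_d^{n+1}`.
Since `∂∂β = 0`, the coefficient of `σ×d` in `∂ẑ` is the sum of its coefficients in `∂α` and `∂γ`.
The first vanishes because `∂α` lies in `K̂_{d+1}^{n+1}`. The second vanishes because `σ×d` is a
face of no cell of `K̂_d^{n+1}` when `max σ = d`: a coface `τ×d` would need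
`d ≤ max τ < max σ`, and the horizontal cells `σ×[d-1,d]`, `σ×[d,d+1]` are not in `K̂_d^{n+1}`.
-/

section PrismBoundary

variable (K : DeltaComplex F n)

noncomputable def hchain (w : K.Cell →₀ F) (t : ℤ) : PCell K.Cell →₀ F :=
  Finsupp.mapDomain (PCell.horiz · t) w

lemma pbd_eq_linearCombination (c : PCell K.Cell →₀ F) :
    pbd K c = Finsupp.linearCombination F (pcellBd K) c := rfl

lemma pbd_add (c c' : PCell K.Cell →₀ F) : pbd K (c + c') = pbd K c + pbd K c' := by
  simp only [pbd_eq_linearCombination, map_add]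

lemma pbd_sub (c c' : PCell K.Cell →₀ F) : pbd K (c - c') = pbd K c - pbd K c' := by
  simp only [pbd_eq_linearCombination, map_sub]

lemma pbd_smul (a : F) (c : PCell K.Cell →₀ F) : pbd K (a • c) = a • pbd K c := by
  simp only [pbd_eq_linearCombination, map_smul]

lemma pbd_single (x : PCell K.Cell) (a : F) : pbd K (Finsupp.single x a) = a • pcellBd K x := by
  simp only [pbd_eq_linearCombination, Finsupp.linearCombination_single]

lemma bd_add (w w' : K.Cell →₀ F) : bd K (w + w') = bd K w + bd K w' := by
  simp only [bd, ← Finsupp.linearCombination_apply, map_add]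

lemma bd_single (τ : K.Cell) (a : F) : bd K (Finsupp.single τ a) = a • K.bdry τ := by
  simp only [bd, ← Finsupp.linearCombination_apply, Finsupp.linearCombination_single]

lemma bd_bdry (τ : K.Cell) : bd K (K.bdry τ) = 0 := K.bdry_bdry τ

lemma vchain_eq_mapDomain (w : K.Cell →₀ F) (t : ℤ) :
    vchain K w t = Finsupp.mapDomain (PCell.vert · t) w := rfl

lemma pcellBd_vert (τ : K.Cell) (t : ℤ) :
    pcellBd K (PCell.vert τ t) = vchain K (K.bdry τ) t := rfl

lemma pcellBd_horiz (σ : K.Cell) (t : ℤ) :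
    pcellBd K (PCell.horiz σ t) =
      Finsupp.single (PCell.vert σ (t + 1)) 1 - Finsupp.single (PCell.vert σ t) 1
        - hchain K (K.bdry σ) t := rfl

lemma pbd_vchain (w : K.Cell →₀ F) (t : ℤ) : pbd K (vchain K w t) = vchain K (bd K w) t := by
  induction w using Finsupp.induction_linear with
  | zero => simp [vchain_eq_mapDomain, pbd_eq_linearCombination, bd]
  | add v w hv hw =>
    simp only [vchain_eq_mapDomain, Finsupp.mapDomain_add, pbd_add, bd_add] at hv hw ⊢
    rw [hv, hw]
  | single τ a =>
    simp [vchain_eq_mapDomain, pbd_single, bd_single, pcellBd_vert, Finsupp.mapDomain_smul]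

lemma pbd_hchain (w : K.Cell →₀ F) (t : ℤ) :
    pbd K (hchain K w t) = vchain K w (t + 1) - vchain K w t - hchain K (bd K w) t := by
  induction w using Finsupp.induction_linear with
  | zero => simp [vchain_eq_mapDomain, hchain, pbd_eq_linearCombination, bd]
  | add v w hv hw =>
    simp only [vchain_eq_mapDomain, hchain, Finsupp.mapDomain_add, pbd_add, bd_add] at hv hw ⊢
    rw [hv, hw]
    abel
  | single σ a =>
    simp [vchain_eq_mapDomain, hchain, pbd_single, bd_single, pcellBd_horiz,
      Finsupp.mapDomain_smul, smul_sub]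

lemma pbd_pcellBd (x : PCell K.Cell) : pbd K (pcellBd K x) = 0 := by
  cases x with
  | vert τ t => rw [pcellBd_vert, pbd_vchain, bd_bdry, vchain_eq_mapDomain, Finsupp.mapDomain_zero]
  | horiz σ t =>
    rw [pcellBd_horiz, pbd_sub, pbd_sub, pbd_single, pbd_single, pbd_hchain, bd_bdry, one_smul,
      one_smul, pcellBd_vert, pcellBd_vert, hchain, Finsupp.mapDomain_zero]
    abel

lemma pbd_pbd (c : PCell K.Cell →₀ F) : pbd K (pbd K c) = 0 := by
  induction c using Finsupp.induction_linear with
  | zero => simp [pbd_eq_linearCombination]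
  | add c c' hc hc' => rw [pbd_add, pbd_add, hc, hc', add_zero]
  | single x a => rw [pbd_single, pbd_smul, pbd_pcellBd, smul_zero]


lemma pbd_apply_eq_zero_of_suppOn {c : PCell K.Cell →₀ F}
    {S : PCell K.Cell → Prop} (hc : SuppOn c S) {y : PCell K.Cell}
    (hS : ∀ x, S x → pcellBd K x y = 0) : pbd K c y = 0 := by
  rw [pbd, Finsupp.sum_apply]
  refine Finset.sum_eq_zero fun x hx => ?_
  dsimp only
  rw [Finsupp.smul_apply, hS x (hc x (Finsupp.mem_support_iff.mp hx)), smul_zero]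

lemma pcellBd_apply_vert_eq_zero_of_inSub {i j : ℤ}
    {x : PCell K.Cell} (hx : inSub K i j x) {σ : K.Cell} (hσ : K.tmax σ ≤ i) :
    pcellBd K x (PCell.vert σ i) = 0 := by
  cases x with
  | vert τ t =>
    rw [pcellBd_vert, vchain, Finsupp.sum_apply]
    refine Finset.sum_eq_zero fun ρ hρ => Finsupp.single_eq_of_ne ?_
    have := K.nest τ ρ (Finsupp.mem_support_iff.mp hρ)
    simp only [inSub] at hx
    intro h
    obtain ⟨rfl, rfl⟩ := PCell.vert.inj h
    omega
  | horiz ρ t =>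
    have hρσ : ρ ≠ σ := by
      rintro rfl
      simp only [inSub] at hx
      omega
    simp [pcellBd_horiz, hchain, hρσ, Finsupp.mapDomain_of_notMem_range]

end PrismBoundary

theorem statement_8_general {F : Type} [Field F] {n : ℤ} (K : DeltaComplex F n) (b d : ℤ)
    (z : PCell K.Cell →₀ F)
    (σ : K.Cell) (hσ : K.tmax σ = d) (hσz : pbd K z (PCell.vert σ d) ≠ 0) :
    ¬ InImg K (inSub K b (n + 1)) (inSub K (d + 1) (n + 1))
        (inSub K b (n + 1)) (inSub K d (n + 1)) z := by
  rintro ⟨α, β, γ, ⟨-, hα⟩, -, hγ, rfl⟩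
  have hα_zero : pbd K α (PCell.vert σ d) = 0 := by
    by_contra h
    have := hα _ h
    simp only [inSub] at this
    omega
  have hγ_zero : pbd K γ (PCell.vert σ d) = 0 :=
    pbd_apply_eq_zero_of_suppOn K hγ fun x hx => pcellBd_apply_vert_eq_zero_of_inSub K hx hσ.le
  rw [pbd_add, pbd_add, pbd_pbd, add_zero, Finsupp.add_apply, hα_zero, hγ_zero, add_zero] at hσz
  exact hσz rfl

/-- Lemma (open endpoint, `K̂[b,d)`): if the boundary of a relative cycle `ẑ` of the pair
`K̂[b,d) = (K̂_b^{n+1}, K̂_d^{n+1})` contains a vertical cell `σ×d` with `max σ = d`, then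
`[ẑ]` is not in the image of `H(K̂[b,d+1)) → H(K̂[b,d))`. -/
theorem statement_8 {F : Type} [Field F] {n : ℤ} (K : DeltaComplex F n) (b d : ℤ)
    (z : PCell K.Cell →₀ F)
    (hz : RelCycle K (inSub K b (n + 1)) (inSub K d (n + 1)) z)
    (σ : K.Cell) (hσ : K.tmax σ = d) (hσz : pbd K z (PCell.vert σ d) ≠ 0) :
    ¬ InImg K (inSub K b (n + 1)) (inSub K (d + 1) (n + 1))
        (inSub K b (n + 1)) (inSub K d (n + 1)) z :=
  statement_8_general K b d z σ hσ hσz
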